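/- arXiv:1601.00775 — 8 statements merged into one kernel-verified Lean document; each statement's English description precedes it below -/
import Mathlib

section
/- Let M be a finitely generated module over the ring of integers O of an algebraically closed complete nonarchimedean valued field (e.g. O_{C_p}), let N be a submodule of M, and let r > s > 0 be rational numbers. If m^{≥s}·M ⊆ N + m^{≥r}·M, where m^{≥t} denotes the ideal of elements of valuation ≥ t, then m^{≥s}·M ⊆ N. -/
open scoped NNReal

variable (K : Type*) [Field K] [Valued K ℝ≥0]

/-- The ideal `m^{≥c}` of the valuation ring: elements of (multiplicative) valuation at
most `c` (i.e. additive valuation at least `-log c`). -/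
def mgeIdeal (c : ℝ≥0) : Ideal ((Valued.v : Valuation K ℝ≥0).valuationSubring) where
  carrier := {x | Valued.v (x : K) ≤ c}
  add_mem' := by
    intro a b ha hb
    have hab : ((a + b : (Valued.v : Valuation K ℝ≥0).valuationSubring) : K)
        = (a : K) + (b : K) := rfl
    simp only [Set.mem_setOf_eq] at ha hb ⊢
    rw [hab]
    exact le_trans (Valued.v.map_add _ _) (max_le ha hb)
  zero_mem' := by simp
  smul_mem' := by
    intro r x hx
    have hr : Valued.v (r : K) ≤ 1 :=
      (Valuation.mem_valuationSubring_iff _ _).mp r.2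
    have : Valued.v ((r • x : (Valued.v : Valuation K ℝ≥0).valuationSubring) : K)
        = Valued.v ((r : K) * (x : K)) := rfl
    rw [Set.mem_setOf_eq, this, Valued.v.map_mul]
    calc Valued.v (r : K) * Valued.v (x : K) ≤ 1 * c := mul_le_mul' hr hx
      _ = c := one_mul c


lemma exists_val_eq {p : ℕ} (hp : p.Prime) [IsAlgClosed K]
    (hvp : Valued.v (p : K) = ((p : ℝ≥0))⁻¹) (q : ℚ) (hq : 0 < q) :
    ∃ π : (Valued.v : Valuation K ℝ≥0).valuationSubring,
      Valued.v (π : K) = (p : ℝ≥0) ^ (-(q : ℝ)) := by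
  obtain ⟨y, hy⟩ := IsAlgClosed.exists_pow_nat_eq ((p : K) ^ q.num.toNat) q.pos
  have hvy : Valued.v y ^ q.den = ((p : ℝ≥0))⁻¹ ^ q.num.toNat := by
    rw [← map_pow, hy, map_pow, hvp]
  have hnum : ((q.num.toNat : ℝ)) = (q.num : ℝ) := by
    exact_mod_cast congrArg (Int.cast : ℤ → ℝ) (Int.toNat_of_nonneg (Rat.num_nonneg.mpr hq.le))
  have hqden : (q : ℝ) * (q.den : ℝ) = (q.num : ℝ) := by
    rw [Rat.cast_def]; field_simp
  have h1 : Valued.v y ^ ((q.den : ℕ) : ℝ) = (p : ℝ≥0) ^ (-(q.num : ℝ)) := by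
    rw [NNReal.rpow_natCast, hvy, ← NNReal.rpow_natCast ((p : ℝ≥0))⁻¹ q.num.toNat,
      NNReal.inv_rpow, ← NNReal.rpow_neg, hnum]
  have h2 : ((p : ℝ≥0) ^ (-(q : ℝ))) ^ ((q.den : ℕ) : ℝ) = (p : ℝ≥0) ^ (-(q.num : ℝ)) := by
    rw [← NNReal.rpow_mul, neg_mul, hqden]
  have hv : Valued.v y = (p : ℝ≥0) ^ (-(q : ℝ)) :=
    NNReal.rpow_left_injective (x := ((q.den : ℕ) : ℝ))
      (by exact_mod_cast q.den_nz) (h1.trans h2.symm)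
  refine ⟨⟨y, ?_⟩, hv⟩
  rw [Valuation.mem_valuationSubring_iff, hv]
  exact NNReal.rpow_le_one_of_one_le_of_nonpos
    (by exact_mod_cast hp.one_lt.le) (by simp [hq.le])

lemma mgeIdeal_eq_span (π : (Valued.v : Valuation K ℝ≥0).valuationSubring)
    (hπ : (π : K) ≠ 0) :
    mgeIdeal K (Valued.v (π : K)) = Ideal.span {π} := by
  ext x
  rw [Ideal.mem_span_singleton]
  constructor
  · intro hx
    have hvπ : Valued.v (π : K) ≠ 0 := by simpa using hπ
    have hc : Valued.v ((x : K) * (π : K)⁻¹) ≤ 1 := by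
      rw [map_mul, map_inv₀]
      calc Valued.v (x : K) * (Valued.v (π : K))⁻¹
          ≤ Valued.v (π : K) * (Valued.v (π : K))⁻¹ := mul_le_mul_left hx _
        _ = 1 := mul_inv_cancel₀ hvπ
    refine ⟨⟨(x : K) * (π : K)⁻¹, hc⟩, ?_⟩
    ext
    push_cast
    field_simp
  · rintro ⟨c, rfl⟩
    have hmul : Valued.v ((π * c : (Valued.v : Valuation K ℝ≥0).valuationSubring) : K)
        = Valued.v (π : K) * Valued.v (c : K) := by
      push_cast; rw [map_mul]
    show Valued.v ((π * c : (Valued.v : Valuation K ℝ≥0).valuationSubring) : K)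
        ≤ Valued.v (π : K)
    rw [hmul]
    calc Valued.v (π : K) * Valued.v (c : K) ≤ Valued.v (π : K) * 1 :=
        mul_le_mul_right c.2 _
      _ = _ := mul_one _

/-- Nakayama-type lemma over the ring of integers `O` of an algebraically closed complete
nonarchimedean valued field (e.g. `O_{ℂ_p}`): if `M` is a finitely generated `O`-module,
`N ⊆ M` a submodule, and `r > s > 0` are rationals with
`m^{≥s}·M ⊆ N + m^{≥r}·M`, then `m^{≥s}·M ⊆ N`.  Here `m^{≥t}` is the ideal of elements
of additive valuation `≥ t`, the valuation being normalized by `v(p) = 1`. -/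
theorem smul_le_of_smul_le_sup_smul
    {p : ℕ} (hp : p.Prime) [CompleteSpace K] [IsAlgClosed K]
    (hvp : Valued.v (p : K) = ((p : ℝ≥0))⁻¹)
    (M : Type*) [AddCommGroup M]
    [Module ((Valued.v : Valuation K ℝ≥0).valuationSubring) M]
    [Module.Finite ((Valued.v : Valuation K ℝ≥0).valuationSubring) M]
    (N : Submodule ((Valued.v : Valuation K ℝ≥0).valuationSubring) M)
    (r s : ℚ) (hs : 0 < s) (hrs : s < r)
    (h : mgeIdeal K ((p : ℝ≥0) ^ (-(s : ℝ))) • (⊤ : Submodule _ M)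
        ≤ N ⊔ mgeIdeal K ((p : ℝ≥0) ^ (-(r : ℝ))) • (⊤ : Submodule _ M)) :
    mgeIdeal K ((p : ℝ≥0) ^ (-(s : ℝ))) • (⊤ : Submodule _ M) ≤ N := by
  have hp1 : (1 : ℝ≥0) < (p : ℝ≥0) := by exact_mod_cast hp.one_lt
  have hp0 : ((p : ℝ≥0)) ≠ 0 := by positivity
  obtain ⟨πs, hπs⟩ := exists_val_eq K hp hvp s hs
  obtain ⟨πd, hπd⟩ := exists_val_eq K hp hvp (r - s) (by linarith)
  have hπs0 : (πs : K) ≠ 0 := by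
    intro h0
    have : Valued.v (πs : K) = 0 := by rw [h0, map_zero]
    rw [hπs] at this
    exact (NNReal.rpow_pos (lt_trans one_pos hp1)).ne' this
  have eqI : mgeIdeal K ((p : ℝ≥0) ^ (-(s : ℝ))) = Ideal.span {πs} := by
    rw [← hπs]; exact mgeIdeal_eq_span K πs hπs0
  have hval : Valued.v ((πd * πs : (Valued.v : Valuation K ℝ≥0).valuationSubring) : K)
      = (p : ℝ≥0) ^ (-(r : ℝ)) := by
    have : ((πd * πs : (Valued.v : Valuation K ℝ≥0).valuationSubring) : K)
        = (πd : K) * (πs : K) := rfl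
    rw [this, map_mul, hπd, hπs, ← NNReal.rpow_add hp0]
    congr 1
    push_cast
    ring
  have hπm0 : ((πd * πs : (Valued.v : Valuation K ℝ≥0).valuationSubring) : K) ≠ 0 := by
    intro h0
    have : Valued.v ((πd * πs : (Valued.v : Valuation K ℝ≥0).valuationSubring) : K) = 0 := by
      rw [h0, map_zero]
    rw [hval] at this
    exact (NNReal.rpow_pos (lt_trans one_pos hp1)).ne' this
  have eqJ : mgeIdeal K ((p : ℝ≥0) ^ (-(r : ℝ))) = Ideal.span {πd * πs} := by
    rw [← hval]; exact mgeIdeal_eq_span K _ hπm0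
  set P : Submodule ((Valued.v : Valuation K ℝ≥0).valuationSubring) M :=
      mgeIdeal K ((p : ℝ≥0) ^ (-(s : ℝ))) • (⊤ : Submodule _ M) with hP
  have hPfg : P.FG := by
    rw [hP, Submodule.smul_eq_map₂]
    exact Submodule.FG.map₂ _ (eqI ▸ Submodule.fg_span_singleton πs) Module.Finite.fg_top
  have hPle : P ≤ N ⊔ Ideal.span {πd} • P := by
    refine le_trans h ?_
    apply sup_le_sup_left
    rw [eqJ, ← Ideal.span_singleton_mul_span_singleton, ← Ideal.smul_eq_mul,
      Submodule.smul_assoc, hP, eqI]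
  have hjac : Ideal.span {πd} ≤ Ideal.jacobson ⊥ := by
    rw [IsLocalRing.jacobson_eq_maximalIdeal ⊥ bot_ne_top, Ideal.span_le,
      Set.singleton_subset_iff]
    rw [SetLike.mem_coe, IsLocalRing.mem_maximalIdeal, mem_nonunits_iff]
    intro hu
    obtain ⟨u, hu⟩ := hu
    have hinv : ((u : (Valued.v : Valuation K ℝ≥0).valuationSubring) : K)
        * (((u⁻¹ : _ˣ) : (Valued.v : Valuation K ℝ≥0).valuationSubring) : K) = 1 := by
      have := u.mul_inv
      exact_mod_cast congrArg (fun z : (Valued.v : Valuation K ℝ≥0).valuationSubring => (z : K)) this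
    have hprod : Valued.v ((u : (Valued.v : Valuation K ℝ≥0).valuationSubring) : K)
        * Valued.v (((u⁻¹ : _ˣ) : (Valued.v : Valuation K ℝ≥0).valuationSubring) : K) = 1 := by
      rw [← map_mul, hinv, map_one]
    have h1 : Valued.v ((u : (Valued.v : Valuation K ℝ≥0).valuationSubring) : K) = 1 := by
      have ha := (u : (Valued.v : Valuation K ℝ≥0).valuationSubring).2
      have hb := ((u⁻¹ : _ˣ) : (Valued.v : Valuation K ℝ≥0).valuationSubring).2
      rw [Valuation.mem_valuationSubring_iff] at ha hb
      have := calc (1 : ℝ≥0) = _ * _ := hprod.symm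
        _ ≤ Valued.v ((u : (Valued.v : Valuation K ℝ≥0).valuationSubring) : K) * 1 :=
            mul_le_mul_right hb _
        _ = _ := mul_one _
      exact le_antisymm ha this
    have hlt : Valued.v ((πd : K)) < 1 := by
      rw [hπd]
      have hsr : (s : ℝ) < (r : ℝ) := by exact_mod_cast hrs
      exact NNReal.rpow_lt_one_of_one_lt_of_neg hp1 (by push_cast; linarith)
    rw [hu] at h1
    rw [h1] at hlt
    exact lt_irrefl _ hlt
  exact Submodule.le_of_le_smul_of_le_jacobson_bot hPfg hjac hPle
end

section
/- Let A → T be a finite ring homomorphism of commutative rings and let P be a prime ideal of T. Let μ: T ⊗_A (T/P) → T/P be the multiplication map. Then Q = ker(μ) is a minimal prime ideal of T ⊗_A (T/P). -/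
open TensorProduct

/-- Let `A → T` be a finite ring homomorphism of commutative rings and `P` a prime ideal
of `T`.  Let `μ : T ⊗[A] (T ⧸ P) → T ⧸ P` be the multiplication map.  Then `ker μ` is a
minimal prime ideal of `T ⊗[A] (T ⧸ P)`. -/
theorem ker_multiplication_map_mem_minimalPrimes
    (A T : Type*) [CommRing A] [CommRing T] [Algebra A T] [Module.Finite A T]
    (P : Ideal T) [P.IsPrime] :
    RingHom.ker ((Algebra.TensorProduct.productMap
        (Ideal.Quotient.mkₐ A P) (AlgHom.id A (T ⧸ P))) : T ⊗[A] (T ⧸ P) →+* T ⧸ P)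
      ∈ minimalPrimes (T ⊗[A] (T ⧸ P)) := by
  classical
  set R := T ⧸ P with hR
  set μ := ((Algebra.TensorProduct.productMap
      (Ideal.Quotient.mkₐ A P) (AlgHom.id A R)) : T ⊗[A] R →+* R) with hμ
  -- the right-factor algebra structure
  letI : Algebra R (T ⊗[A] R) := Algebra.TensorProduct.rightAlgebra
  have halg : (algebraMap R (T ⊗[A] R)) =
      (Algebra.TensorProduct.includeRight : R →ₐ[A] T ⊗[A] R).toRingHom := rfl
  -- T ⊗[A] R is a finite R-module
  haveI hfin : Module.Finite R (T ⊗[A] R) := by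
    haveI : Module.Finite R (R ⊗[A] T) := Module.Finite.base_change A R T
    let e0 := Algebra.TensorProduct.comm A R T
    have hsmul : ∀ (r : R) (x : R ⊗[A] T), e0 (r • x) = r • e0 x := by
      intro r x
      induction x with
      | zero => simp
      | add a b ha hb => rw [smul_add, map_add, ha, hb, map_add, smul_add]
      | tmul a b =>
          rw [Algebra.TensorProduct.comm_tmul, smul_tmul', smul_eq_mul,
            Algebra.TensorProduct.comm_tmul, Algebra.smul_def, halg]
          simp [Algebra.TensorProduct.tmul_mul_tmul, mul_comm]
    let e : R ⊗[A] T →ₗ[R] T ⊗[A] R :=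
      { toFun := e0
        map_add' := map_add e0
        map_smul' := hsmul }
    exact Module.Finite.of_surjective e e0.surjective
  haveI : Algebra.IsIntegral R (T ⊗[A] R) := Algebra.IsIntegral.of_finite R _
  -- the kernel is prime since R is a domain
  haveI hQp : (RingHom.ker μ).IsPrime := RingHom.ker_isPrime μ
  -- μ ∘ includeRight = id, so the contraction of ker μ to R is ⊥
  have hcomp : μ.comp (algebraMap R (T ⊗[A] R)) = RingHom.id R := by
    ext x
    simp [halg, hμ]
  have hcomap : (RingHom.ker μ).comap (algebraMap R (T ⊗[A] R)) = ⊥ := by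
    have : (RingHom.ker μ).comap (algebraMap R (T ⊗[A] R)) =
        RingHom.ker (μ.comp (algebraMap R (T ⊗[A] R))) := rfl
    rw [this, hcomp]
    ext x
    simp [RingHom.mem_ker]
  -- minimality
  refine ⟨⟨hQp, bot_le⟩, ?_⟩
  rintro q ⟨hq, -⟩ hle
  by_contra h
  have hlt : q < RingHom.ker μ := lt_of_le_of_ne hle (by
    intro he; exact h (le_of_eq he.symm))
  obtain ⟨x, hxQ, hxq⟩ := SetLike.exists_of_lt hlt
  haveI : q.IsPrime := hq
  have := Ideal.comap_lt_comap_of_integral_mem_sdiff (I := q) (J := RingHom.ker μ)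
    hle ⟨hxQ, hxq⟩ (Algebra.IsIntegral.isIntegral (R := R) x)
  rw [hcomap] at this
  exact (not_lt_bot) this
end

section
/- Let L be an algebraically closed field, A a finitely generated L-algebra, N a finitely generated projective A-module, T a finite A-algebra acting A-linearly on N, S a finitely generated L-algebra which is a reduced integral domain, and φ: T → S an L-algebra homomorphism. Assume that for every maximal ideal m_x of S there exists a nonzero element f_x ∈ N ⊗_A (S/m_x) with (h ⊗ 1)·f_x = (1 ⊗ φ(h)(x))·f_x for all h ∈ T (where φ(h)(x) denotes the image of φ(h) in S/m_x ≅ L). Then there exists a nonzero element F ∈ N ⊗_A S with (h ⊗ 1)·F = (1 ⊗ φ(h))·F for all h ∈ T. -/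
open TensorProduct

theorem aux_left_inverse {S : Type*} [CommRing S] [IsDomain S]
    {P : Type*} [AddCommGroup P] [Module S P] [Module.Finite S P] [Module.Projective S P]
    {Q : Type*} [AddCommGroup Q] [Module S Q] [Module.Finite S Q] [Module.Projective S Q]
    (Θ : P →ₗ[S] Q) (hΘ : Function.Injective Θ) :
    ∃ g : S, g ≠ 0 ∧ ∃ G : Q →ₗ[S] P, G.comp Θ = g • LinearMap.id := by
  classical
  set K := FractionRing S with hK
  have hinj : Function.Injective (Θ.baseChange K) := by
    have := Module.Flat.lTensor_preserves_injective_linearMap (M := K) Θ hΘ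
    rwa [← LinearMap.baseChange_eq_ltensor] at this
  obtain ⟨G', hG'⟩ := LinearMap.exists_leftInverse_of_injective (Θ.baseChange K)
    (LinearMap.ker_eq_bot.mpr hinj)
  set u : P →ₗ[S] K ⊗[S] P := TensorProduct.mk S K P 1 with hu_def
  set uQ : Q →ₗ[S] K ⊗[S] Q := TensorProduct.mk S K Q 1 with huQ_def
  haveI hu_loc : IsLocalizedModule (nonZeroDivisors S) u :=
    (isLocalizedModule_iff_isBaseChange (nonZeroDivisors S) K u).mpr
      (TensorProduct.isBaseChange (R := S) (M := P) (S := K))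
  -- injectivity of u
  have hu_inj : Function.Injective u := by
    obtain ⟨n, πP, hπP⟩ := Module.Finite.exists_fin' S P
    obtain ⟨σP, hσP⟩ := Module.projective_lifting_property πP LinearMap.id hπP
    have hσP_inj : Function.Injective σP := by
      intro a b hab
      have h1 : πP (σP a) = a := LinearMap.congr_fun hσP a
      have h2 : πP (σP b) = b := LinearMap.congr_fun hσP b
      rw [← h1, ← h2, hab]
    refine (injective_iff_map_eq_zero u).mpr (fun x hx => ?_)
    obtain ⟨s, hs⟩ := (IsLocalizedModule.eq_zero_iff (nonZeroDivisors S) u).mp hx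
    rw [Submonoid.smul_def] at hs
    have h1 : (s : S) • σP x = 0 := by
      rw [← map_smul, hs, map_zero]
    have hs0 : (s : S) ≠ 0 := mem_nonZeroDivisors_iff_ne_zero.mp s.2
    have h2 : σP x = 0 := by
      funext i
      have := congrFun h1 i
      simp only [Pi.smul_apply, smul_eq_mul, Pi.zero_apply] at this
      rcases mul_eq_zero.mp this with h | h
      · exact absurd h hs0
      · exact h
    apply hσP_inj
    rw [h2, map_zero]
  -- splitting of Q
  obtain ⟨c, πQ, hπQ⟩ := Module.Finite.exists_fin' S Q
  obtain ⟨σQ, hσQ⟩ := Module.projective_lifting_property πQ LinearMap.id hπQ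
  -- denominators
  have hsurj : ∀ j : Fin c, ∃ x : P × (nonZeroDivisors S),
      x.2 • (G' (uQ (πQ (Pi.single j 1)))) = u x.1 :=
    fun j => IsLocalizedModule.surj (nonZeroDivisors S) u _
  choose pq hpq using hsurj
  set g : S := ∏ j, ((pq j).2 : S) with hg_def
  have hg_mem : g ∈ nonZeroDivisors S := Submonoid.prod_mem _ (fun j _ => (pq j).2.2)
  have hg0 : g ≠ 0 := mem_nonZeroDivisors_iff_ne_zero.mp hg_mem
  set w : Fin c → P := fun j => (∏ i ∈ Finset.univ.erase j, ((pq i).2 : S)) • (pq j).1 with hw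
  set G₁ : (Fin c → S) →ₗ[S] P := (Pi.basisFun S (Fin c)).constr ℕ w with hG₁
  set G : Q →ₗ[S] P := G₁ ∘ₗ σQ with hG
  have key1 : (u ∘ₗ G₁)
      = g • ((G'.restrictScalars S) ∘ₗ uQ ∘ₗ πQ) := by
    apply (Pi.basisFun S (Fin c)).ext
    intro j
    have hb : (Pi.basisFun S (Fin c)) j = Pi.single j 1 := by
      simp [Pi.basisFun_apply]
    rw [hb]
    have hconstr : G₁ (Pi.single j 1) = w j := by
      rw [hG₁, ← hb]
      exact (Pi.basisFun S (Fin c)).constr_basis ℕ w j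
    have : u (w j) = g • G' (uQ (πQ (Pi.single j 1))) := by
      rw [hw]
      simp only []
      rw [map_smul, ← hpq j, Submonoid.smul_def, smul_smul]
      congr 1
      rw [Finset.prod_erase_mul Finset.univ _ (Finset.mem_univ j)]
    simp only [LinearMap.comp_apply, LinearMap.smul_apply, LinearMap.coe_restrictScalars]
    rw [hconstr, this]
  have key : ∀ q : Q, u (G q) = g • G' (uQ q) := by
    intro q
    have hq : πQ (σQ q) = q := LinearMap.congr_fun hσQ q
    have := LinearMap.congr_fun key1 (σQ q)
    simp only [LinearMap.comp_apply, LinearMap.smul_apply,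
      LinearMap.coe_restrictScalars, hq] at this
    simpa [hG] using this
  refine ⟨g, hg0, G, ?_⟩
  apply LinearMap.ext
  intro p
  apply hu_inj
  have h1 : uQ (Θ p) = Θ.baseChange K (u p) := by
    rw [hu_def, huQ_def]
    rfl
  have h2 : G' (Θ.baseChange K (u p)) = u p := LinearMap.congr_fun hG' (u p)
  have h3 : u ((G.comp Θ) p) = g • (u p) := by
    rw [LinearMap.comp_apply, key (Θ p), h1, h2]
  rw [h3, LinearMap.smul_apply, LinearMap.id_apply, map_smul]



set_option maxHeartbeats 1000000 in
/-- Deligne–Serre style lifting lemma (existence of a global eigenvector):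
`L` algebraically closed field, `A` a finitely generated `L`-algebra, `N` a finitely
generated projective `A`-module, `T` a finite `A`-algebra acting `A`-linearly on `N`
through `ρ`, `S` a reduced finitely generated `L`-algebra which is an integral domain and
`φ : T → S` an `L`-algebra homomorphism whose composite with `A → T` gives the
`A`-algebra structure of `S`.  If for every maximal ideal `m` of `S` there is a nonzero
eigenvector `fₓ ∈ (S ⧸ m) ⊗[A] N` with `(h ⊗ 1) fₓ = (1 ⊗ φ(h)(x)) fₓ` for all `h ∈ T`,
then there is a nonzero `F ∈ S ⊗[A] N` with `(h ⊗ 1) F = (1 ⊗ φ(h)) F` for all `h ∈ T`. -/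
theorem exists_global_eigenvector
    (L : Type*) [Field L] [IsAlgClosed L]
    (A : Type*) [CommRing A] [Algebra L A] [Algebra.FiniteType L A]
    (T : Type*) [CommRing T] [Algebra L T] [Algebra A T] [IsScalarTower L A T]
    [Module.Finite A T]
    (S : Type*) [CommRing S] [IsDomain S] [IsReduced S] [Algebra L S]
    [Algebra.FiniteType L S] [Algebra A S] [IsScalarTower L A S]
    (N : Type*) [AddCommGroup N] [Module A N] [Module.Finite A N] [Module.Projective A N]
    (ρ : T →ₐ[A] Module.End A N)
    (φ : T →ₐ[L] S)
    (hcomp : ∀ a : A, algebraMap A S a = φ (algebraMap A T a))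
    (hx : ∀ m : Ideal S, m.IsMaximal →
      ∃ fx : (S ⧸ m) ⊗[A] N, fx ≠ 0 ∧
        ∀ h : T, LinearMap.lTensor (S ⧸ m) (ρ h : N →ₗ[A] N) fx
          = Ideal.Quotient.mk m (φ h) • fx) :
    ∃ F : S ⊗[A] N, F ≠ 0 ∧
      ∀ h : T, LinearMap.lTensor S (ρ h : N →ₗ[A] N) F = φ h • F := by
  classical
  -- the eigen-operators
  set D : T → (S ⊗[A] N →ₗ[S] S ⊗[A] N) :=
    fun h => (ρ h : N →ₗ[A] N).baseChange S - φ h • LinearMap.id with hD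
  -- generators of T as an A-module
  obtain ⟨tset, htspan⟩ : ∃ s : Finset T, Submodule.span A (s : Set T) = ⊤ :=
    Module.Finite.fg_top (R := A) (M := T)
  set ι := {x : T // x ∈ tset}
  set Θ : (S ⊗[A] N) →ₗ[S] (ι → S ⊗[A] N) := LinearMap.pi (fun i => D i.1) with hΘdef
  -- linearity of D in its T-argument, applied to a fixed F
  have Dlin : ∀ (F : S ⊗[A] N), (∀ i : ι, D i.1 F = 0) → ∀ h : T, D h F = 0 := by
    intro F hF h
    have hmem : h ∈ Submodule.span A (tset : Set T) := htspan ▸ Submodule.mem_top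
    induction hmem using Submodule.span_induction with
    | mem x hxx => exact hF ⟨x, hxx⟩
    | zero =>
        simp [hD, map_zero, LinearMap.baseChange_sub]
    | add x y hxs hys hxF hyF =>
        have : D (x + y) F = D x F + D y F := by
          simp only [hD, map_add, LinearMap.baseChange_add, add_smul,
            LinearMap.sub_apply, LinearMap.add_apply, LinearMap.smul_apply]
          abel
        rw [this, hxF, hyF, add_zero]
    | smul a x hxs hxF =>
        have hρ : (ρ (a • x) : N →ₗ[A] N) = a • (ρ x : N →ₗ[A] N) := by
          rw [map_smul]
        have hφ : φ (a • x) = algebraMap A S a * φ x := by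
          rw [Algebra.smul_def, map_mul, ← hcomp]
        have : D (a • x) F = a • D x F := by
          rw [hD]
          simp only [LinearMap.sub_apply, LinearMap.smul_apply, LinearMap.id_apply]
          rw [hρ, LinearMap.baseChange_smul, hφ, mul_smul, algebraMap_smul, smul_sub]
          rfl
        rw [this, hxF, smul_zero]
  by_cases hker : ∃ F : S ⊗[A] N, F ≠ 0 ∧ Θ F = 0
  · obtain ⟨F, hF0, hFΘ⟩ := hker
    refine ⟨F, hF0, fun h => ?_⟩
    have hD0 : D h F = 0 := by
      apply Dlin F
      · intro i
        have := congrFun hFΘ i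
        simpa [hΘdef] using this
    have : (ρ h : N →ₗ[A] N).baseChange S F = φ h • F := by
      have := sub_eq_zero.mp (by simpa [hD] using hD0)
      simpa using this
    rw [← this]
    exact (congrFun (LinearMap.baseChange_eq_ltensor (A := S) (f := (ρ h : N →ₗ[A] N))) F).symm
  · exfalso
    -- Θ is injective
    have hΘinj : Function.Injective Θ := by
      refine (injective_iff_map_eq_zero Θ).mpr (fun F hF => ?_)
      by_contra hne
      exact hker ⟨F, hne, hF⟩
    -- instances for the target of Θ
    obtain ⟨n, πP, hπP⟩ := Module.Finite.exists_fin' S (S ⊗[A] N)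
    obtain ⟨σP, hσP⟩ := Module.projective_lifting_property πP LinearMap.id hπP
    haveI : Module.Projective S (ι → S ⊗[A] N) := by
      refine Module.Projective.of_split (M := ι → (Fin n → S))
        (LinearMap.compLeft σP ι) (LinearMap.compLeft πP ι) ?_
      refine LinearMap.ext fun v => funext fun i => ?_
      simp only [LinearMap.comp_apply, LinearMap.compLeft_apply, Function.comp_apply,
        LinearMap.id_apply]
      exact LinearMap.congr_fun hσP (v i)
    obtain ⟨g, hg0, G, hG⟩ := aux_left_inverse Θ hΘinj
    -- a maximal ideal avoiding g
    haveI : IsJacobsonRing S := isJacobsonRing_of_finiteType (A := L)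
    have hjac : (⊥ : Ideal S).jacobson = ⊥ := by
      rw [← Ideal.radical_eq_jacobson]
      simpa [nilradical] using nilradical_eq_zero S
    obtain ⟨m, ⟨_, hm⟩, hgm⟩ : ∃ m ∈ {J : Ideal S | ⊥ ≤ J ∧ J.IsMaximal}, g ∉ m := by
      by_contra hc
      push_neg at hc
      have hgj : g ∈ (⊥ : Ideal S).jacobson := by
        rw [Ideal.jacobson]
        exact Ideal.mem_sInf.mpr (fun {J} hJ => hc J hJ)
      rw [hjac] at hgj
      exact hg0 hgj
    obtain ⟨fx, hfx0, hfxeig⟩ := hx m hm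
    haveI := hm
    set κ := S ⧸ m with hκ
    set e : κ ⊗[S] (S ⊗[A] N) ≃ₗ[κ] κ ⊗[A] N :=
      TensorProduct.AlgebraTensorModule.cancelBaseChange A S κ κ N with he
    set y : κ ⊗[S] (S ⊗[A] N) := e.symm fx with hy
    have hy0 : y ≠ 0 := fun hc => hfx0 (by rw [← e.apply_symm_apply fx, ← hy, hc, map_zero])
    -- D commutes with the cancel-base-change identification
    have comm : ∀ (h : T) (z : κ ⊗[S] (S ⊗[A] N)),
        e ((D h).baseChange κ z)
          = LinearMap.lTensor κ (ρ h : N →ₗ[A] N) (e z)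
            - Ideal.Quotient.mk m (φ h) • (e z) := by
      intro h z
      induction z using TensorProduct.induction_on with
      | zero => simp
      | add a b ha hb =>
          simp only [map_add, ha, hb, smul_add]
          abel
      | tmul q w =>
          induction w using TensorProduct.induction_on with
          | zero => simp
          | add a b ha hb =>
              simp only [tmul_add, map_add, ha, hb, smul_add]
              abel
          | tmul s nn =>
              have hsm : (φ h • (q ⊗ₜ[S] (s ⊗ₜ[A] nn)) : κ ⊗[S] (S ⊗[A] N))
                  = (φ h • q) ⊗ₜ[S] (s ⊗ₜ[A] nn) := rfl
              simp only [hD, LinearMap.baseChange_sub, LinearMap.baseChange_smul,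
                LinearMap.sub_apply, LinearMap.smul_apply, LinearMap.baseChange_tmul,
                LinearMap.baseChange_id, LinearMap.id_apply, map_sub, he, hsm,
                TensorProduct.AlgebraTensorModule.cancelBaseChange_tmul,
                LinearMap.lTensor_tmul]
              congr 1
              rw [smul_tmul']
              congr 1
              rw [smul_comm]
              rw [← Ideal.Quotient.algebraMap_eq, algebraMap_smul]
    -- Θ base-changed kills y
    have hDy : ∀ h : T, (D h).baseChange κ y = 0 := by
      intro h
      apply e.injective
      rw [comm h y, map_zero]
      have : e y = fx := by rw [hy, e.apply_symm_apply]
      rw [this, hfxeig h, sub_self]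
    have hΘy : Θ.baseChange κ y = 0 := by
      apply (TensorProduct.piRight S κ κ (fun _ : ι => S ⊗[A] N)).injective
      rw [map_zero]
      funext i
      have hz : ∀ z : κ ⊗[S] (ι → S ⊗[A] N),
          TensorProduct.piRightHom S κ κ (fun _ : ι => S ⊗[A] N) z i
            = (LinearMap.proj i : (ι → S ⊗[A] N) →ₗ[S] S ⊗[A] N).baseChange κ z := by
        intro z
        induction z using TensorProduct.induction_on with
        | zero => simp
        | add a b ha hb => simp [map_add, ha, hb]
        | tmul q w => simp
      rw [Pi.zero_apply, TensorProduct.piRight_apply, hz]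
      rw [← LinearMap.comp_apply, ← LinearMap.baseChange_comp, hΘdef, LinearMap.proj_pi]
      exact hDy i.1
    -- contradiction via the left inverse
    have hgy : g • y = 0 := by
      have h1 := congrArg (G.baseChange κ) hΘy
      rw [map_zero, ← LinearMap.comp_apply, ← LinearMap.baseChange_comp, hG,
        LinearMap.baseChange_smul, LinearMap.baseChange_id] at h1
      simpa using h1
    have hmkg : Ideal.Quotient.mk m g ≠ 0 := fun hc =>
      hgm (Ideal.Quotient.eq_zero_iff_mem.mp hc)
    letI : Field κ := Ideal.Quotient.field m
    have hgy' : (Ideal.Quotient.mk m g) • y = 0 := by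
      rw [← algebraMap_smul κ g y] at hgy
      exact hgy
    have : y = 0 := by
      have := congrArg (fun z => (Ideal.Quotient.mk m g)⁻¹ • z) hgy'
      simpa [smul_smul, inv_mul_cancel₀ hmkg] using this
    exact hy0 this
end

section
/- In the setting of the eigenvector-lifting lemma, assume in addition that S is a principal ideal domain. Then the nonzero eigenvector F ∈ N ⊗_A S with (h ⊗ 1)F = (1 ⊗ φ(h))F for all h ∈ T can be chosen so that its image F(x) in N ⊗_A (S/m_x) is nonzero for every maximal ideal m_x of S. -/
open TensorProduct

/-!
Over the principal ideal domain `S`, the module `S ⊗[A] N` is finite free. It contains a nonzero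
joint eigenvector: otherwise the operators `ρ(tᵢ) ⊗ 1 - φ(tᵢ)`, for generators `tᵢ` of `T`, are
jointly injective, so clearing the denominators of a left inverse over `Frac S` shows that some
`s ≠ 0` times the identity factors through them. Since `S` is Jacobson, some maximal ideal `m`
avoids `s`, and the operators stay jointly injective modulo `m`, contradicting the eigenvector
given in `(S ⧸ m) ⊗[A] N`. By the Smith normal form of `S ∙ F`, an eigenvector `F` is a multiple
`d • b i` of a vector of some basis `b`; then `b i` is again an eigenvector, and the reduction of
a basis vector modulo any maximal ideal is nonzero.
-/

theorem Ideal.exists_isMaximal_notMem_of_ne_zero {R : Type*} [CommRing R] [IsReduced R]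
    [IsJacobsonRing R] {s : R} (hs : s ≠ 0) : ∃ m : Ideal R, m.IsMaximal ∧ s ∉ m := by
  by_contra! h
  have hs' : s ∈ (⊥ : Ideal R).jacobson := Submodule.mem_sInf.mpr fun m hm => h m hm.2
  rw [IsJacobsonRing.out ‹_› isRadical_bot] at hs'
  exact hs (Ideal.mem_bot.mp hs')

theorem Module.Basis.exists_eq_smul_basis_apply {R M ι : Type*} [CommRing R] [IsDomain R]
    [IsPrincipalIdealRing R] [AddCommGroup M] [Module R M] [Finite ι] (b : Module.Basis ι R M)
    {x : M} (hx : x ≠ 0) : ∃ (b' : Module.Basis ι R M) (i : ι) (d : R), x = d • b' i := by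
  obtain ⟨n, bM, bN, f, a, snf⟩ := (R ∙ x).smithNormalForm b
  let x' : R ∙ x := ⟨x, Submodule.mem_span_singleton_self x⟩
  have : Nontrivial (R ∙ x) := nontrivial_of_ne x' 0 (by simpa [x'] using hx)
  obtain ⟨j⟩ := bN.index_nonempty
  -- `bN j` and `x` generate the same rank-one module, so `x` is a unit multiple of `bN j`.
  obtain ⟨r, hr⟩ := Submodule.mem_span_singleton.mp (bN j).2
  have hrx : r * bN.repr x' j = 1 := by
    have : r • x' = bN j := Subtype.ext hr
    simpa using congr(bN.repr $this j)
  refine ⟨bM, f j, bN.repr x' j * a j, ?_⟩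
  calc x = (bN.repr x' j * r) • x := by rw [mul_comm, hrx, one_smul]
    _ = _ := by rw [mul_smul, hr, snf, mul_smul]

section LinearMap

variable {R M M' : Type*} [CommRing R] [AddCommGroup M] [Module R M] [AddCommGroup M']
  [Module R M']

theorem LinearMap.exists_comp_eq_smul_id_of_injective [IsDomain R] [Module.Finite R M]
    [Module.FinitePresentation R M'] {f : M →ₗ[R] M'} (hf : Function.Injective f) :
    ∃ s : R, s ≠ 0 ∧ ∃ g : M' →ₗ[R] M, g ∘ₗ f = s • LinearMap.id := by
  let K := FractionRing R
  have hfK : Function.Injective (f.baseChange K) := by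
    rw [LinearMap.baseChange_eq_ltensor]
    exact Module.Flat.lTensor_preserves_injective_linearMap f hf
  obtain ⟨gK, hgK⟩ := (f.baseChange K).exists_leftInverse_of_injective (ker_eq_bot.mpr hfK)
  let ι : M →ₗ[R] K ⊗[R] M := TensorProduct.mk R K M 1
  obtain ⟨h, s, hs⟩ := Module.FinitePresentation.exists_lift_of_isLocalizedModule
    (nonZeroDivisors R) ι (gK.restrictScalars R ∘ₗ TensorProduct.mk R K M' 1)
  have hcomp : ι ∘ₗ (h ∘ₗ f) = ι ∘ₗ ((s : R) • LinearMap.id) := by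
    ext x
    have hx : gK (1 ⊗ₜ f x) = 1 ⊗ₜ x := by simpa using congr($hgK (1 ⊗ₜ[R] x))
    simpa [ι, hx, Submonoid.smul_def] using congr($hs (f x))
  obtain ⟨s', hs'⟩ :=
    Module.Finite.exists_smul_of_comp_eq_of_isLocalizedModule (nonZeroDivisors R) ι _ _ hcomp
  refine ⟨s' * s, mul_ne_zero (nonZeroDivisors.coe_ne_zero s') (nonZeroDivisors.coe_ne_zero s),
    (s' : R) • h, ?_⟩
  simpa [Submonoid.smul_def, mul_smul, LinearMap.smul_comp] using hs'

theorem LinearMap.exists_isMaximal_injective_baseChange_quotient [IsDomain R] [IsJacobsonRing R]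
    [Module.Finite R M] [Module.FinitePresentation R M'] {f : M →ₗ[R] M'}
    (hf : Function.Injective f) :
    ∃ m : Ideal R, m.IsMaximal ∧ Function.Injective (f.baseChange (R ⧸ m)) := by
  obtain ⟨s, hs, g, hgf⟩ := f.exists_comp_eq_smul_id_of_injective hf
  obtain ⟨m, hm, hsm⟩ := Ideal.exists_isMaximal_notMem_of_ne_zero hs
  refine ⟨m, hm, fun x y hxy => ?_⟩
  let _ := Ideal.Quotient.field m
  have hunit : IsUnit (algebraMap R (R ⧸ m) s) := by
    rwa [Ideal.Quotient.algebraMap_eq, isUnit_iff_ne_zero, ne_eq, Ideal.Quotient.eq_zero_iff_mem]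
  have hgxy := congr(g.baseChange (R ⧸ m) $hxy)
  rw [← LinearMap.comp_apply, ← LinearMap.comp_apply, ← LinearMap.baseChange_comp, hgf,
    LinearMap.baseChange_smul, LinearMap.baseChange_id] at hgxy
  simp only [LinearMap.smul_apply, LinearMap.id_apply, ← algebraMap_smul (R ⧸ m) s] at hgxy
  exact hunit.smul_left_cancel.mp hgxy

theorem LinearMap.ker_baseChange_pi (R' : Type*) [CommRing R'] [Algebra R R'] {ι : Type*}
    [Finite ι] {M' : ι → Type*} [∀ i, AddCommGroup (M' i)] [∀ i, Module R (M' i)]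
    (f : ∀ i, M →ₗ[R] M' i) :
    ker ((pi f).baseChange R') = ⨅ i, ker ((f i).baseChange R') := by
  classical
  have := Fintype.ofFinite ι
  have key (v : R' ⊗[R] M) :
      piRight R R' R' M' ((pi f).baseChange R' v) = fun i => (f i).baseChange R' v := by
    induction v using TensorProduct.induction_on with
    | zero => ext i; simp
    | tmul r x => ext i; simp
    | add v w hv hw => rw [map_add, map_add, hv, hw]; ext i; simp
  ext v
  simp [Submodule.mem_iInf, ← (piRight R R' R' M').map_eq_zero_iff, key, funext_iff]

theorem LinearMap.exists_isMaximal_iInf_ker_baseChange_eq_bot [IsDomain R] [IsJacobsonRing R]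
    {ι : Type*} [Finite ι] [Module.Finite R M] [Module.FinitePresentation R M']
    (f : ι → M →ₗ[R] M') (hf : ⨅ i, ker (f i) = ⊥) :
    ∃ m : Ideal R, m.IsMaximal ∧ ⨅ i, ker ((f i).baseChange (R ⧸ m)) = ⊥ := by
  rw [← ker_pi, ker_eq_bot] at hf
  obtain ⟨m, hm, hinj⟩ := (pi f).exists_isMaximal_injective_baseChange_quotient hf
  exact ⟨m, hm, by rwa [← ker_baseChange_pi, ker_eq_bot]⟩

end LinearMap

section CancelBaseChange

variable (A S R : Type*) {N : Type*} [CommRing A] [CommRing S] [CommRing R] [Algebra A S]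
  [Algebra S R] [Algebra A R] [IsScalarTower A S R] [AddCommGroup N] [Module A N]

theorem TensorProduct.AlgebraTensorModule.cancelBaseChange_baseChange_baseChange {N' : Type*}
    [AddCommGroup N'] [Module A N'] (f : N →ₗ[A] N') (v : R ⊗[S] (S ⊗[A] N)) :
    cancelBaseChange A S R R N' ((f.baseChange S).baseChange R v) =
      f.baseChange R (cancelBaseChange A S R R N v) :=
  (congr($(lTensor_comp_cancelBaseChange A S R f) v)).symm

theorem TensorProduct.AlgebraTensorModule.cancelBaseChange_one_tmul (w : S ⊗[A] N) :
    cancelBaseChange A S R R N (1 ⊗ₜ w) =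
      (IsScalarTower.toAlgHom A S R).toLinearMap.rTensor N w := by
  induction w using TensorProduct.induction_on with
  | zero => simp
  | tmul s n => simp [Algebra.algebraMap_eq_smul_one]
  | add v w hv hw => simp_all [tmul_add]

variable {A S R}

theorem Module.Basis.rTensor_toAlgHom_ne_zero [Nontrivial R] {ι : Type*}
    (b : Module.Basis ι S (S ⊗[A] N)) (i : ι) :
    (IsScalarTower.toAlgHom A S R).toLinearMap.rTensor N (b i) ≠ 0 := by
  rw [← AlgebraTensorModule.cancelBaseChange_one_tmul, ← Module.Basis.baseChange_apply,
    LinearEquiv.map_ne_zero_iff]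
  exact (b.baseChange R).ne_zero i

end CancelBaseChange

section JointEigenspace

variable {A T N : Type*} [CommRing A] [AddCommGroup T] [Module A T] [AddCommGroup N] [Module A N]
  (ρ : T →ₗ[A] Module.End A N)

def jointEigenspace (R : Type*) [CommRing R] [Algebra A R] (χ : T → R) :
    Submodule R (R ⊗[A] N) :=
  ⨅ h, Module.End.eigenspace ((ρ h).baseChange R) (χ h)

variable {ρ} {R : Type*} [CommRing R] [Algebra A R]

theorem mem_jointEigenspace {χ : T → R} {F : R ⊗[A] N} :
    F ∈ jointEigenspace ρ R χ ↔ ∀ h, (ρ h).lTensor R F = χ h • F := by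
  simp [jointEigenspace, Submodule.mem_iInf, LinearMap.baseChange_eq_ltensor]

theorem smul_mem_jointEigenspace_iff [IsDomain R] [Module.IsTorsionFree R (R ⊗[A] N)]
    {χ : T → R} {F : R ⊗[A] N} {d : R} (hd : d ≠ 0) :
    d • F ∈ jointEigenspace ρ R χ ↔ F ∈ jointEigenspace ρ R χ := by
  simp [jointEigenspace, Submodule.mem_iInf, Module.End.eigenspace_def, hd]

theorem jointEigenspace_eq_iInf_of_span_eq_top {ι : Type*} {t : ι → T}
    (ht : Submodule.span A (Set.range t) = ⊤) (χ : T →ₗ[A] R) :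
    jointEigenspace ρ R χ = ⨅ i, Module.End.eigenspace ((ρ (t i)).baseChange R) (χ (t i)) := by
  refine le_antisymm (le_iInf fun i => iInf_le _ (t i)) fun F hF => ?_
  simp only [Submodule.mem_iInf, Module.End.mem_eigenspace_iff,
    LinearMap.baseChange_eq_ltensor] at hF
  let defect : T →ₗ[A] R ⊗[A] N :=
    LinearMap.applyₗ F ∘ₗ LinearMap.lTensorHom R ∘ₗ ρ - χ.smulRight F
  have : defect = 0 := LinearMap.ext_on_range ht fun i => by simp [defect, hF i]
  exact mem_jointEigenspace.mpr fun h => sub_eq_zero.mp congr($this h)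

theorem jointEigenspace_ne_bot_of_forall_isMaximal {S : Type*} [CommRing S] [IsDomain S]
    [IsJacobsonRing S] [Algebra A S] [Module.Finite A T] [Module.FinitePresentation A N]
    (χ : T →ₗ[A] S)
    (h : ∀ m : Ideal S, m.IsMaximal → jointEigenspace ρ (S ⧸ m) (Ideal.Quotient.mk m ∘ χ) ≠ ⊥) :
    jointEigenspace ρ S χ ≠ ⊥ := by
  obtain ⟨s, hs⟩ := Module.Finite.fg_top (R := A) (M := T)
  intro hbot
  rw [jointEigenspace_eq_iInf_of_span_eq_top (t := Subtype.val) (by rwa [Subtype.range_coe]) χ]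
    at hbot
  simp only [Module.End.eigenspace_def] at hbot
  obtain ⟨m, hm, hm_bot⟩ := LinearMap.exists_isMaximal_iInf_ker_baseChange_eq_bot _ hbot
  obtain ⟨fx, hfx, hfx0⟩ := (Submodule.ne_bot_iff _).mp (h m hm)
  let e := AlgebraTensorModule.cancelBaseChange A S (S ⧸ m) (S ⧸ m) N
  have hv : e.symm fx ∈ ⨅ i : s, LinearMap.ker
      (((ρ i).baseChange S - χ i • 1).baseChange (S ⧸ m)) := by
    simp only [Submodule.mem_iInf, LinearMap.mem_ker, ← e.map_eq_zero_iff]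
    intro i
    rw [LinearMap.baseChange_sub, LinearMap.sub_apply, map_sub,
      AlgebraTensorModule.cancelBaseChange_baseChange_baseChange, e.apply_symm_apply,
      LinearMap.baseChange_eq_ltensor, mem_jointEigenspace.mp hfx i, LinearMap.baseChange_smul,
      LinearMap.smul_apply, ← algebraMap_smul (S ⧸ m) (χ i), Module.End.one_eq_id,
      LinearMap.baseChange_id, LinearMap.id_apply, map_smul, e.apply_symm_apply,
      Ideal.Quotient.algebraMap_eq, Function.comp_apply, sub_self]
  exact hfx0 (e.symm.map_eq_zero_iff.mp ((Submodule.eq_bot_iff _).mp hm_bot _ hv))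

end JointEigenspace

theorem exists_global_eigenvector_nonvanishing_general
    (L : Type*) [Field L]
    (A : Type*) [CommRing A]
    (T : Type*) [CommRing T] [Algebra L T] [Algebra A T]
    [Module.Finite A T]
    (S : Type*) [CommRing S] [IsDomain S] [IsPrincipalIdealRing S] [Algebra L S]
    [Algebra.FiniteType L S] [Algebra A S]
    (N : Type*) [AddCommGroup N] [Module A N] [Module.Finite A N] [Module.Projective A N]
    (ρ : T →ₐ[A] Module.End A N)
    (φ : T →ₐ[L] S)
    (hcomp : ∀ a : A, algebraMap A S a = φ (algebraMap A T a))
    (hx : ∀ m : Ideal S, m.IsMaximal →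
      ∃ fx : (S ⧸ m) ⊗[A] N, fx ≠ 0 ∧
        ∀ h : T, LinearMap.lTensor (S ⧸ m) (ρ h : N →ₗ[A] N) fx
          = Ideal.Quotient.mk m (φ h) • fx) :
    ∃ F : S ⊗[A] N, F ≠ 0 ∧
      (∀ h : T, LinearMap.lTensor S (ρ h : N →ₗ[A] N) F = φ h • F) ∧
      ∀ m : Ideal S, m.IsMaximal →
        LinearMap.rTensor N (Ideal.Quotient.mkₐ A m).toLinearMap F ≠ 0 := by
  have : IsJacobsonRing S := isJacobsonRing_of_finiteType (A := L)
  have : Module.FinitePresentation A N := Module.finitePresentation_of_projective A N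
  let χ : T →ₐ[A] S := { φ.toRingHom with commutes' := fun a => (hcomp a).symm }
  have hE : jointEigenspace ρ.toLinearMap S χ.toLinearMap ≠ ⊥ :=
    jointEigenspace_ne_bot_of_forall_isMaximal χ.toLinearMap fun m hm => by
      obtain ⟨fx, hfx0, hfx⟩ := hx m hm
      exact (Submodule.ne_bot_iff _).mpr ⟨fx, mem_jointEigenspace.mpr fun h => hfx h, hfx0⟩
  obtain ⟨F₀, hF₀, hF₀0⟩ := (Submodule.ne_bot_iff _).mp hE
  obtain ⟨b, i, d, rfl⟩ :=
    (Module.Free.chooseBasis S (S ⊗[A] N)).exists_eq_smul_basis_apply hF₀0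
  have hF : b i ∈ jointEigenspace ρ.toLinearMap S χ.toLinearMap :=
    (smul_mem_jointEigenspace_iff (left_ne_zero_of_smul hF₀0)).mp hF₀
  refine ⟨b i, b.ne_zero i, fun h => mem_jointEigenspace.mp hF h, fun m hm => ?_⟩
  let _ := Ideal.Quotient.field m
  exact b.rTensor_toAlgHom_ne_zero i

/-- Deligne–Serre style lifting lemma, refined version over a principal ideal domain:
in the setting of the eigenvector-lifting lemma, if moreover `S` is a principal ideal
domain, then the nonzero eigenvector `F ∈ S ⊗[A] N` with `(h ⊗ 1) F = (1 ⊗ φ(h)) F` for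
all `h ∈ T` can be chosen so that its image `F(x)` in `(S ⧸ m) ⊗[A] N` is nonzero for
every maximal ideal `m` of `S`. -/
theorem exists_global_eigenvector_nonvanishing
    (L : Type*) [Field L] [IsAlgClosed L]
    (A : Type*) [CommRing A] [Algebra L A] [Algebra.FiniteType L A]
    (T : Type*) [CommRing T] [Algebra L T] [Algebra A T] [IsScalarTower L A T]
    [Module.Finite A T]
    (S : Type*) [CommRing S] [IsDomain S] [IsPrincipalIdealRing S] [Algebra L S]
    [Algebra.FiniteType L S] [Algebra A S] [IsScalarTower L A S]
    (N : Type*) [AddCommGroup N] [Module A N] [Module.Finite A N] [Module.Projective A N]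
    (ρ : T →ₐ[A] Module.End A N)
    (φ : T →ₐ[L] S)
    (hcomp : ∀ a : A, algebraMap A S a = φ (algebraMap A T a))
    (hx : ∀ m : Ideal S, m.IsMaximal →
      ∃ fx : (S ⧸ m) ⊗[A] N, fx ≠ 0 ∧
        ∀ h : T, LinearMap.lTensor (S ⧸ m) (ρ h : N →ₗ[A] N) fx
          = Ideal.Quotient.mk m (φ h) • fx) :
    ∃ F : S ⊗[A] N, F ≠ 0 ∧
      (∀ h : T, LinearMap.lTensor S (ρ h : N →ₗ[A] N) F = φ h • F) ∧
      ∀ m : Ideal S, m.IsMaximal →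
        LinearMap.rTensor N (Ideal.Quotient.mkₐ A m).toLinearMap F ≠ 0 :=
  exists_global_eigenvector_nonvanishing_general L A T S N ρ φ hcomp hx
end

section
/- Let R be a valuation ring of characteristic p with additive valuation v, let f ≥ 1, and let λ_0, …, λ_{f−1} ∈ R with v(λ_i) = w_i ≥ 0. Suppose (z_0, …, z_{f−1}) is a tuple in R, not all zero, satisfying z_{i−1}^p = λ_i · z_i for all i (indices mod f). Then every z_i is nonzero, and for each i, v(z_{i−1}) = (1/(p^f − 1)) · Σ_{l=0}^{f−1} p^{f−1−l} · w_{i+l} (indices mod f). In particular, if w_i ≤ w for all i, then v(z_i) ≤ w/(p−1) for all i. -/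
/-- Let `R` be a valuation ring of characteristic `p` with additive real-valued valuation
`v`, and let `λ₀, …, λ_{f−1} ∈ R` with `v (λ i) = w i ≥ 0`.  If `(z i)` is a cyclic tuple
in `R`, not all zero, with `z (i−1) ^ p = λ i * z i` for all `i`, then every `z i` is
nonzero and `v (z (i−1)) = (1/(p^f − 1)) · Σ_{l<f} p^{f−1−l} · w (i+l)`; in particular if
`w i ≤ w` for all `i` then `v (z i) ≤ w/(p−1)` for all `i`. -/
theorem cyclic_frobenius_valuation_system
    {R : Type*} [CommRing R] [IsDomain R] [ValuationRing R]
    {p : ℕ} (hp : p.Prime) [CharP R p]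
    (v : R → ℝ)
    (hmul : ∀ x y : R, x ≠ 0 → y ≠ 0 → v (x * y) = v x + v y)
    (hnonneg : ∀ x : R, x ≠ 0 → 0 ≤ v x)
    (f : ℕ) (hf : 0 < f)
    (lam : ZMod f → R) (w : ZMod f → ℝ)
    (hlam : ∀ i, v (lam i) = w i) (hw : ∀ i, 0 ≤ w i)
    (z : ZMod f → R) (hz : ∃ i, z i ≠ 0)
    (heq : ∀ i : ZMod f, z (i - 1) ^ p = lam i * z i) :
    (∀ i, z i ≠ 0) ∧
      (∀ i : ZMod f, v (z (i - 1)) =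
        ((p : ℝ) ^ f - 1)⁻¹ *
          ∑ l ∈ Finset.range f, (p : ℝ) ^ (f - 1 - l) * w (i + (l : ZMod f))) ∧
      (∀ wmax : ℝ, (∀ i, w i ≤ wmax) → ∀ i, v (z i) ≤ wmax / ((p : ℝ) - 1)) := by
  haveI : NeZero f := ⟨hf.ne'⟩
  have hone : v 1 = 0 := by
    have := hmul 1 1 one_ne_zero one_ne_zero
    simp only [mul_one] at this
    linarith
  have vpow : ∀ (x : R), x ≠ 0 → ∀ n : ℕ, v (x ^ n) = n * v x := by
    intro x hx n
    induction n with
    | zero => simpa using hone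
    | succ n ih =>
      rw [pow_succ, hmul _ x (pow_ne_zero n hx) hx, ih]
      push_cast; ring
  have hall : ∀ i, z i ≠ 0 := by
    by_contra h
    push_neg at h
    obtain ⟨i, hi⟩ := h
    have key : ∀ n : ℕ, z (i - (n : ZMod f)) = 0 := by
      intro n
      induction n with
      | zero => simpa using hi
      | succ n ih =>
        have h1 := heq (i - (n : ZMod f))
        have hz0 : z (i - ((n + 1 : ℕ) : ZMod f)) ^ p = 0 := by
          have e : i - ((n + 1 : ℕ) : ZMod f) = (i - (n : ZMod f)) - 1 := by
            push_cast; ring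
          rw [e, h1, ih, mul_zero]
        exact (pow_eq_zero_iff hp.pos.ne').mp hz0
    obtain ⟨j, hj⟩ := hz
    apply hj
    have := key ((i - j).val)
    simpa [ZMod.natCast_val, ZMod.cast_id] using this
  have hlam0 : ∀ j, lam j ≠ 0 := by
    intro j
    have h1 := heq j
    have : lam j * z j ≠ 0 := by rw [← h1]; exact pow_ne_zero _ (hall _)
    exact left_ne_zero_of_mul this
  have hrec : ∀ j : ZMod f, (p : ℝ) * v (z (j - 1)) = w j + v (z j) := by
    intro j
    have h1 := congrArg v (heq j)
    rw [vpow _ (hall _) p, hmul _ _ (hlam0 j) (hall j), hlam] at h1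
    exact h1
  have key : ∀ n : ℕ, ∀ i : ZMod f,
      (p : ℝ) ^ n * v (z (i - 1)) =
        (∑ l ∈ Finset.range n, (p : ℝ) ^ (n - 1 - l) * w (i + (l : ZMod f)))
          + v (z (i - 1 + (n : ZMod f))) := by
    intro n
    induction n with
    | zero => intro i; simp
    | succ n ih =>
      intro i
      have h1 := ih i
      have h2 := hrec (i + (n : ZMod f))
      have e : i - 1 + (n : ZMod f) = (i + (n : ZMod f)) - 1 := by ring
      have e2 : i - 1 + ((n + 1 : ℕ) : ZMod f) = i + (n : ZMod f) := by push_cast; ring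
      rw [Finset.sum_range_succ, e2]
      have hs : ∑ l ∈ Finset.range n, (p : ℝ) ^ (n + 1 - 1 - l) * w (i + (l : ZMod f))
          = ∑ l ∈ Finset.range n, (p : ℝ) * ((p : ℝ) ^ (n - 1 - l) * w (i + (l : ZMod f))) := by
        apply Finset.sum_congr rfl
        intro l hl
        have hl' : l < n := Finset.mem_range.mp hl
        rw [← mul_assoc, ← pow_succ']
        congr 2
        omega
      rw [hs]
      have en : n + 1 - 1 - n = 0 := by omega
      rw [en, pow_zero, one_mul]
      rw [e] at h1
      calc (p : ℝ) ^ (n + 1) * v (z (i - 1))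
          = (p : ℝ) * ((p : ℝ) ^ n * v (z (i - 1))) := by ring
        _ = (p : ℝ) * ((∑ l ∈ Finset.range n, (p : ℝ) ^ (n - 1 - l) * w (i + (l : ZMod f)))
              + v (z ((i + (n : ZMod f)) - 1))) := by rw [h1]
        _ = (∑ l ∈ Finset.range n, (p : ℝ) * ((p : ℝ) ^ (n - 1 - l) * w (i + (l : ZMod f))))
              + (p : ℝ) * v (z ((i + (n : ZMod f)) - 1)) := by
            rw [mul_add, Finset.mul_sum]
        _ = (∑ l ∈ Finset.range n, (p : ℝ) * ((p : ℝ) ^ (n - 1 - l) * w (i + (l : ZMod f))))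
              + (w (i + (n : ZMod f)) + v (z (i + (n : ZMod f)))) := by rw [h2]
        _ = _ := by ring
  have hp2 : (2 : ℝ) ≤ (p : ℝ) := by exact_mod_cast hp.two_le
  have hpf1 : (1 : ℝ) < (p : ℝ) ^ f := by
    calc (1:ℝ) < 2 ^ f := one_lt_pow₀ one_lt_two hf.ne'
      _ ≤ (p : ℝ) ^ f := pow_le_pow_left₀ (by norm_num) hp2 f
  have hne : (p : ℝ) ^ f - 1 ≠ 0 := by linarith
  have main : ∀ i : ZMod f, v (z (i - 1)) =
      ((p : ℝ) ^ f - 1)⁻¹ *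
        ∑ l ∈ Finset.range f, (p : ℝ) ^ (f - 1 - l) * w (i + (l : ZMod f)) := by
    intro i
    have h := key f i
    rw [ZMod.natCast_self, add_zero] at h
    rw [inv_mul_eq_div, eq_div_iff hne]
    linarith
  refine ⟨hall, main, ?_⟩
  intro wmax hwm i
  have h := main (i + 1)
  rw [show i + 1 - 1 = i by ring] at h
  have hgeom : ∑ l ∈ Finset.range f, (p : ℝ) ^ (f - 1 - l)
      = ((p : ℝ) ^ f - 1) / ((p : ℝ) - 1) := by
    rw [Finset.sum_range_reflect (fun k => (p : ℝ) ^ k) f]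
    exact geom_sum_eq (by linarith) f
  have hsum : ∑ l ∈ Finset.range f, (p : ℝ) ^ (f - 1 - l) * w (i + 1 + (l : ZMod f))
      ≤ (∑ l ∈ Finset.range f, (p : ℝ) ^ (f - 1 - l)) * wmax := by
    rw [Finset.sum_mul]
    apply Finset.sum_le_sum
    intro l _
    exact mul_le_mul_of_nonneg_left (hwm _) (by positivity)
  have hinv : (0:ℝ) ≤ ((p : ℝ) ^ f - 1)⁻¹ := inv_nonneg.mpr (by linarith)
  calc v (z i) = ((p : ℝ) ^ f - 1)⁻¹ *
        ∑ l ∈ Finset.range f, (p : ℝ) ^ (f - 1 - l) * w (i + 1 + (l : ZMod f)) := h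
    _ ≤ ((p : ℝ) ^ f - 1)⁻¹ * ((∑ l ∈ Finset.range f, (p : ℝ) ^ (f - 1 - l)) * wmax) :=
        mul_le_mul_of_nonneg_left hsum hinv
    _ = wmax / ((p : ℝ) - 1) := by
        rw [hgeom]
        field_simp
end

section
/- Let R be a valuation ring with additive real-valued valuation v, let p ≥ 2 be an integer, f ≥ 1, and let c > 0. Suppose x_0, …, x_{f−1} ∈ R satisfy p·v(x_{i−1}) ≥ v(x_i) + c_i for all i (indices mod f), where each c_i ≥ c. Then v(x_i) ≥ c/(p−1) for all i. -/
/-- Cyclic system of valuation inequalities: if `R` is a valuation ring with additive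
real-valued valuation `v`, `p ≥ 2` an integer, `c > 0`, and `x₀, …, x_{f−1} ∈ R` satisfy
`p · v (x (i−1)) ≥ v (x i) + c i` for all `i` (indices mod `f`) with each `c i ≥ c`, then
`v (x i) ≥ c/(p−1)` for all `i`. -/
theorem cyclic_valuation_inequality
    {R : Type*} [CommRing R] [IsDomain R] [ValuationRing R] (v : R → ℝ)
    {p : ℕ} (hp : 2 ≤ p)
    (f : ℕ) (hf : 0 < f)
    (c : ℝ) (hc : 0 < c)
    (cs : ZMod f → ℝ) (hcs : ∀ i, c ≤ cs i)
    (x : ZMod f → R)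
    (h : ∀ i : ZMod f, v (x i) + cs i ≤ (p : ℝ) * v (x (i - 1))) :
    ∀ i, c / ((p : ℝ) - 1) ≤ v (x i) := by
  intro i
  have hp1 : (1 : ℝ) < (p : ℝ) := by exact_mod_cast hp.trans_lt' one_lt_two
  have hppos : (0 : ℝ) ≤ (p : ℝ) := by positivity
  -- iterated inequality
  have key : ∀ n : ℕ, v (x i) + c * (∑ j ∈ Finset.range n, (p : ℝ) ^ j)
      ≤ (p : ℝ) ^ n * v (x (i - (n : ZMod f))) := by
    intro n
    induction n with
    | zero => simp
    | succ n ih =>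
      have h1 := h (i - (n : ZMod f))
      have h2 : v (x (i - (n : ZMod f))) + c ≤ (p : ℝ) * v (x (i - ((n + 1 : ℕ) : ZMod f))) := by
        have : i - (n : ZMod f) - 1 = i - ((n + 1 : ℕ) : ZMod f) := by
          push_cast; ring
        rw [← this]
        linarith [hcs (i - (n : ZMod f))]
      have hpn : (0 : ℝ) ≤ (p : ℝ) ^ n := by positivity
      have h3 : (p : ℝ) ^ n * (v (x (i - (n : ZMod f))) + c)
          ≤ (p : ℝ) ^ n * ((p : ℝ) * v (x (i - ((n + 1 : ℕ) : ZMod f)))) :=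
        mul_le_mul_of_nonneg_left h2 hpn
      rw [Finset.sum_range_succ]
      calc v (x i) + c * (∑ j ∈ Finset.range n, (p : ℝ) ^ j + (p : ℝ) ^ n)
          = (v (x i) + c * ∑ j ∈ Finset.range n, (p : ℝ) ^ j) + c * (p : ℝ) ^ n := by ring
        _ ≤ (p : ℝ) ^ n * v (x (i - (n : ZMod f))) + c * (p : ℝ) ^ n := by linarith
        _ = (p : ℝ) ^ n * (v (x (i - (n : ZMod f))) + c) := by ring
        _ ≤ (p : ℝ) ^ n * ((p : ℝ) * v (x (i - ((n + 1 : ℕ) : ZMod f)))) := h3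
        _ = (p : ℝ) ^ (n + 1) * v (x (i - ((n + 1 : ℕ) : ZMod f))) := by ring
  have hf0 : ((f : ℕ) : ZMod f) = 0 := by exact_mod_cast ZMod.natCast_self f
  have hkey := key f
  rw [hf0, sub_zero] at hkey
  have hgeom : ∑ j ∈ Finset.range f, (p : ℝ) ^ j = ((p : ℝ) ^ f - 1) / ((p : ℝ) - 1) :=
    geom_sum_eq hp1.ne' f
  rw [hgeom] at hkey
  have hpf : (1 : ℝ) < (p : ℝ) ^ f := one_lt_pow₀ hp1 hf.ne'
  have hps : (0 : ℝ) < (p : ℝ) - 1 := by linarith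
  have hpfs : (0 : ℝ) < (p : ℝ) ^ f - 1 := by linarith
  rw [div_le_iff₀ hps]
  -- from hkey: (p^f - 1) * v(x i) ≥ c * (p^f - 1)/(p - 1)
  have : c * (((p : ℝ) ^ f - 1) / ((p : ℝ) - 1)) ≤ ((p : ℝ) ^ f - 1) * v (x i) := by
    nlinarith [hkey]
  have h4 : c * ((p:ℝ)^f - 1) ≤ (((p:ℝ)^f - 1) * v (x i)) * ((p:ℝ) - 1) := by
    calc c * ((p:ℝ)^f - 1) = c * (((p:ℝ)^f - 1)/((p:ℝ) - 1)) * ((p:ℝ) - 1) := by field_simp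
      _ ≤ _ := mul_le_mul_of_nonneg_right this hps.le
  nlinarith [h4, hpfs, mul_pos hpfs hps]
end

section
/- Let K be an algebraically closed field complete with respect to a valuation v extending the p-adic valuation (v(p)=1), and let p be a prime. Let c_3, c_1, c_0 ∈ K with v(c_3) = 1, v(c_1) = p/(p+1), v(c_0) = 1. Then every root y of the polynomial y^{p+1} + c_3·y^p + c_1·y + c_0 satisfies v(y) = 1/(p+1). -/
open scoped NNReal

/-!
Put `t = p^{-1/(p+1)}`. Then `|c₀| = t^{p+1}`, `|c₁| = t^p` and `|c₃| ≤ t`, so the Newton polygon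
is a single segment of slope `t`. If `|y| < t` the term `c₀` strictly dominates the other three,
if `|y| > t` the term `y^{p+1}` does; either way the ultrametric inequality forbids the sum to vanish.
-/

namespace Valuation

variable {R Γ₀ : Type*} [Ring R] [LinearOrderedCommGroupWithZero Γ₀] (v : Valuation R Γ₀)

theorem map_eq_of_add_eq_zero {a b : R} (h : a + b = 0) : v a = v b := by
  rw [eq_neg_of_add_eq_zero_left h, map_neg]

theorem map_eq_of_pow_succ_add_mul_pow_add_mul_add_eq_zero {n : ℕ} (hn : n ≠ 0) {t : Γ₀}
    {c d e y : R} (hc : v c ≤ t) (hd : v d ≤ t ^ n) (he : v e = t ^ (n + 1))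
    (hy : y ^ (n + 1) + c * y ^ n + d * y + e = 0) :
    v y = t := by
  rcases lt_trichotomy (v y) t with hlt | heq | hgt
  · have ht : 0 < t := zero_le.trans_lt hlt
    have hyn : v y ^ n < t ^ n := pow_lt_pow_left₀ hlt zero_le hn
    have hsum : v (y ^ (n + 1) + c * y ^ n + d * y) < v e := by
      rw [he]
      refine v.map_add_lt (v.map_add_lt ?_ ?_) ?_ <;> simp only [map_mul, map_pow]
      · exact pow_lt_pow_left₀ hlt zero_le n.succ_ne_zero
      · calc v c * v y ^ n ≤ t * v y ^ n := mul_le_mul_of_nonneg_right hc zero_le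
          _ < t * t ^ n := mul_lt_mul_of_pos_left hyn ht
          _ = t ^ (n + 1) := (pow_succ' t n).symm
      · calc v d * v y ≤ t ^ n * v y := mul_le_mul_of_nonneg_right hd zero_le
          _ < t ^ n * t := mul_lt_mul_of_pos_left hlt (pow_pos ht n)
          _ = t ^ (n + 1) := (pow_succ t n).symm
    exact absurd (v.map_eq_of_add_eq_zero hy) hsum.ne
  · exact heq
  · have hy0 : 0 < v y := zero_le.trans_lt hgt
    have hsum : v (c * y ^ n + d * y + e) < v (y ^ (n + 1)) := by
      rw [map_pow]
      refine v.map_add_lt (v.map_add_lt ?_ ?_) ?_ <;> simp only [map_mul, map_pow, he]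
      · rw [pow_succ']
        exact mul_lt_mul_of_pos_right (hc.trans_lt hgt) (pow_pos hy0 n)
      · rw [pow_succ]
        exact mul_lt_mul_of_pos_right (hd.trans_lt (pow_lt_pow_left₀ hgt zero_le hn)) hy0
      · exact pow_lt_pow_left₀ hgt zero_le n.succ_ne_zero
    rw [add_assoc, add_assoc, ← add_assoc (c * y ^ n)] at hy
    exact absurd (v.map_eq_of_add_eq_zero hy) hsum.ne'

end Valuation

theorem NNReal.rpow_neg_one_div_pow (x : ℝ≥0) (a : ℝ) (k : ℕ) :
    (x ^ (-(1 / a))) ^ k = x ^ (-(k / a)) := by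
  rw [← NNReal.rpow_natCast, ← NNReal.rpow_mul]
  ring_nf

theorem root_valuation_critical_f_one_general
    {p : ℕ} (hp : p.Prime)
    (K : Type*) [Field K] [Valued K ℝ≥0]
    (c3 c1 c0 : K)
    (h3 : Valued.v c3 = (p : ℝ≥0) ^ (-1 : ℝ))
    (h1 : Valued.v c1 = (p : ℝ≥0) ^ (-((p : ℝ) / ((p : ℝ) + 1))))
    (h0 : Valued.v c0 = (p : ℝ≥0) ^ (-1 : ℝ))
    (y : K) (hy : y ^ (p + 1) + c3 * y ^ p + c1 * y + c0 = 0) :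
    Valued.v y = (p : ℝ≥0) ^ (-(1 / ((p : ℝ) + 1))) := by
  have hp1 : (1 : ℝ≥0) ≤ p := by exact_mod_cast hp.one_le
  have hpow (k : ℕ) := NNReal.rpow_neg_one_div_pow p ((p : ℝ) + 1) k
  refine Valued.v.map_eq_of_pow_succ_add_mul_pow_add_mul_add_eq_zero hp.ne_zero ?_ ?_ ?_ hy
  · rw [h3]
    refine NNReal.rpow_le_rpow_of_exponent_le hp1 (neg_le_neg ?_)
    exact div_le_one_of_le₀ (le_add_of_nonneg_left p.cast_nonneg) (by positivity)
  · rw [h1, hpow]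
  · rw [h0, hpow]
    push_cast
    rw [div_self (by positivity)]

/-- Newton polygon computation (f = 1 case): over an algebraically closed complete valued
field `K` with valuation normalized by `v(p) = 1` (multiplicatively, `|p| = p⁻¹`), if
`v(c₃) = 1`, `v(c₁) = p/(p+1)` and `v(c₀) = 1` (multiplicatively `|c₃| = |c₀| = p⁻¹`,
`|c₁| = p^{-p/(p+1)}`), then every root `y` of `y^{p+1} + c₃ y^p + c₁ y + c₀` satisfies
`v(y) = 1/(p+1)`, i.e. `|y| = p^{-1/(p+1)}`. -/
theorem root_valuation_critical_f_one
    {p : ℕ} (hp : p.Prime)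
    (K : Type*) [Field K] [Valued K ℝ≥0] [CompleteSpace K] [IsAlgClosed K]
    (hvp : Valued.v (p : K) = ((p : ℝ≥0))⁻¹)
    (c3 c1 c0 : K)
    (h3 : Valued.v c3 = (p : ℝ≥0) ^ (-1 : ℝ))
    (h1 : Valued.v c1 = (p : ℝ≥0) ^ (-((p : ℝ) / ((p : ℝ) + 1))))
    (h0 : Valued.v c0 = (p : ℝ≥0) ^ (-1 : ℝ))
    (y : K) (hy : y ^ (p + 1) + c3 * y ^ p + c1 * y + c0 = 0) :
    Valued.v y = (p : ℝ≥0) ^ (-(1 / ((p : ℝ) + 1))) :=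
  root_valuation_critical_f_one_general hp K c3 c1 c0 h3 h1 h0 y hy
end

section
/- Let K be an algebraically closed field complete with respect to a valuation v with v(p)=1, and let p be a prime. Let A, B, C, D ∈ K with v(A) ≥ p, v(B) = p/(p+1), v(C) = 1 + p²/(p+1), v(D) = 1. Then every root y of the polynomial y^{p²+1} − (D/B)·y^{p²} + (A/B)·y − (C/B) satisfies v(y) = 1/(p+1). -/
open scoped NNReal

/-!
Dividing by `B`, the coefficients `D/B`, `A/B`, `C/B` have absolute values `t`, `≤ t^(p²)` and
`t^(p²+1)`, where `t = p^(-1/(p+1))`: the Newton polygon is a single segment. If `|y| < t` the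
constant term strictly dominates the others, if `|y| > t` the leading term does, and in either case
the ultrametric inequality contradicts the vanishing of the sum.
-/

namespace Valuation

variable {R Γ₀ : Type*} [CommRing R] [LinearOrderedCommGroupWithZero Γ₀] (v : Valuation R Γ₀)
  {n : ℕ} {a c d y : R} {t : Γ₀}

theorem le_apply_of_root_trinomial (hn : n ≠ 0) (hd : v d = t) (ha : v a ≤ t ^ n)
    (hc : v c = t ^ (n + 1)) (hy : y ^ (n + 1) - d * y ^ n + a * y - c = 0) : t ≤ v y := by
  by_contra! hlt
  have ht : 0 < t := lt_of_le_of_lt zero_le hlt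
  have h_lead : v (y ^ (n + 1)) < t ^ (n + 1) := by
    rw [map_pow]
    exact pow_lt_pow_left₀ hlt zero_le n.succ_ne_zero
  have h_mid : v (d * y ^ n) < t ^ (n + 1) := by
    rw [map_mul, map_pow, hd, pow_succ']
    exact mul_lt_mul_of_pos_left (pow_lt_pow_left₀ hlt zero_le hn) ht
  have h_lin : v (a * y) < t ^ (n + 1) :=
    calc v (a * y) ≤ t ^ n * v y := by rw [map_mul]; gcongr
      _ < t ^ n * t := mul_lt_mul_of_pos_left hlt (pow_pos ht n)
      _ = t ^ (n + 1) := (pow_succ t n).symm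
  have hc' : c = y ^ (n + 1) - d * y ^ n + a * y := by linear_combination -hy
  exact (v.map_add_lt (v.map_sub_lt h_lead h_mid) h_lin).ne (hc' ▸ hc)

theorem apply_le_of_root_trinomial (hn : n ≠ 0) (hd : v d = t) (ha : v a ≤ t ^ n)
    (hc : v c = t ^ (n + 1)) (hy : y ^ (n + 1) - d * y ^ n + a * y - c = 0) : v y ≤ t := by
  by_contra! hgt
  have hy0 : 0 < v y := lt_of_le_of_lt zero_le hgt
  have h_mid : v (d * y ^ n) < v y ^ (n + 1) := by
    rw [map_mul, map_pow, hd, pow_succ']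
    exact mul_lt_mul_of_pos_right hgt (pow_pos hy0 n)
  have h_lin : v (a * y) < v y ^ (n + 1) :=
    calc v (a * y) ≤ t ^ n * v y := by rw [map_mul]; gcongr
      _ < v y ^ n * v y := mul_lt_mul_of_pos_right (pow_lt_pow_left₀ hgt zero_le hn) hy0
      _ = v y ^ (n + 1) := (pow_succ _ n).symm
  have h_const : v c < v y ^ (n + 1) := hc ▸ pow_lt_pow_left₀ hgt zero_le n.succ_ne_zero
  have hlead : y ^ (n + 1) = d * y ^ n - a * y + c := by linear_combination hy
  exact (v.map_add_lt (v.map_sub_lt h_mid h_lin) h_const).ne (by rw [← hlead, map_pow])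

theorem apply_eq_of_root_trinomial (hn : n ≠ 0) (hd : v d = t) (ha : v a ≤ t ^ n)
    (hc : v c = t ^ (n + 1)) (hy : y ^ (n + 1) - d * y ^ n + a * y - c = 0) : v y = t :=
  le_antisymm (v.apply_le_of_root_trinomial hn hd ha hc hy)
    (v.le_apply_of_root_trinomial hn hd ha hc hy)

end Valuation

theorem NNReal.rpow_div_rpow_eq_pow {q : ℝ≥0} (hq : q ≠ 0) {x y s : ℝ} (n : ℕ)
    (h : x - y = s * n) : q ^ x / q ^ y = (q ^ s) ^ n := by
  rw [← NNReal.rpow_sub hq, h, NNReal.rpow_mul, NNReal.rpow_natCast]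

theorem root_valuation_critical_f_two_general
    {p : ℕ} (hp : p.Prime)
    (K : Type*) [Field K] [Valued K ℝ≥0]
    (A B C D : K)
    (hA : Valued.v A ≤ (p : ℝ≥0) ^ (-(p : ℝ)))
    (hB : Valued.v B = (p : ℝ≥0) ^ (-((p : ℝ) / ((p : ℝ) + 1))))
    (hC : Valued.v C = (p : ℝ≥0) ^ (-(1 + (p : ℝ) ^ 2 / ((p : ℝ) + 1))))
    (hD : Valued.v D = (p : ℝ≥0) ^ (-1 : ℝ))
    (y : K)
    (hy : y ^ (p ^ 2 + 1) - (D / B) * y ^ (p ^ 2) + (A / B) * y - C / B = 0) :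
    Valued.v y = (p : ℝ≥0) ^ (-(1 / ((p : ℝ) + 1))) := by
  have hp0 : (p : ℝ≥0) ≠ 0 := by exact_mod_cast hp.ne_zero
  have hquot (x₁ x₂ : ℝ) (n : ℕ) (h : x₁ - x₂ = -(1 / ((p : ℝ) + 1)) * n) :=
    NNReal.rpow_div_rpow_eq_pow hp0 n h
  refine Valued.v.apply_eq_of_root_trinomial (pow_ne_zero 2 hp.ne_zero) ?_ ?_ ?_ hy
  · rw [map_div₀, hD, hB, hquot _ _ 1 (by field_simp; ring), pow_one]
  · rw [map_div₀, hB, ← hquot (-p) (-(p / (p + 1))) (p ^ 2) (by push_cast; field_simp; ring)]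
    exact div_le_div_of_nonneg_right hA zero_le
  · rw [map_div₀, hC, hB, hquot _ _ (p ^ 2 + 1) (by push_cast; field_simp; ring)]

/-- Newton polygon computation (f = 2 case): over an algebraically closed complete valued
field `K` with valuation normalized by `v(p) = 1`, if `v(A) ≥ p`, `v(B) = p/(p+1)`,
`v(C) = 1 + p²/(p+1)` and `v(D) = 1`, then every root `y` of
`y^{p²+1} − (D/B)·y^{p²} + (A/B)·y − (C/B)` satisfies `v(y) = 1/(p+1)`. -/
theorem root_valuation_critical_f_two
    {p : ℕ} (hp : p.Prime)
    (K : Type*) [Field K] [Valued K ℝ≥0] [CompleteSpace K] [IsAlgClosed K]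
    (hvp : Valued.v (p : K) = ((p : ℝ≥0))⁻¹)
    (A B C D : K)
    (hA : Valued.v A ≤ (p : ℝ≥0) ^ (-(p : ℝ)))
    (hB : Valued.v B = (p : ℝ≥0) ^ (-((p : ℝ) / ((p : ℝ) + 1))))
    (hC : Valued.v C = (p : ℝ≥0) ^ (-(1 + (p : ℝ) ^ 2 / ((p : ℝ) + 1))))
    (hD : Valued.v D = (p : ℝ≥0) ^ (-1 : ℝ))
    (y : K)
    (hy : y ^ (p ^ 2 + 1) - (D / B) * y ^ (p ^ 2) + (A / B) * y - C / B = 0) :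
    Valued.v y = (p : ℝ≥0) ^ (-(1 / ((p : ℝ) + 1))) :=
  root_valuation_critical_f_two_general hp K A B C D hA hB hC hD y hy
end
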